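/- If f ∈ L^p_loc(ℝ) with p > 1 and b(x) = f(x₁) (a function on ℝⁿ depending only on the first coordinate), then b satisfies the annular Dini–Kato condition: for α = p there exists σ in the Dini class such that sup_x ∫_{r/2 ≤ |x−y| ≤ r} |b(y)|^α / |x−y|^{n−α} dy ≤ σ(r)^α for all small r > 0. -/

import Mathlib

/-!
On the annulus `r/2 ≤ |x - y| ≤ r` the kernel `|x - y|^(p-n)` is comparable to `r^(p-n)`, and
the annulus lies in the cube of side `2r` about `x`. The integrand depends on `y₁` only, so
integrating out the other `n - 1` coordinates of the cube gains a factor `(2r)^(n-1)`, which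
bounds the integral by `C r^(p-1)`, with `C` controlled by the `L^p` mass of `f` on a fixed interval
containing the first coordinates of `Ω`. Then `σ(t) = C^(1/p) t^(1-1/p)` is a Dini function.
-/
open MeasureTheory Real Set Filter Metric
noncomputable section

/-- Euclidean n-space. -/
abbrev Euc (n : ℕ) := EuclideanSpace ℝ (Fin n)

/-- The Dini class 𝒟: increasing σ with σ(t)/t decreasing and integrable on (0,1]. -/
def DiniClass (σ : ℝ → ℝ) : Prop :=
  (∀ t ∈ Set.Ioc (0:ℝ) 1, 0 ≤ σ t) ∧
  MonotoneOn σ (Set.Ioc (0:ℝ) 1) ∧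
  AntitoneOn (fun t => σ t / t) (Set.Ioc (0:ℝ) 1) ∧
  MeasureTheory.IntegrableOn (fun t => σ t / t) (Set.Ioc (0:ℝ) 1)

/-- The annulus {y : r/2 ≤ |x − y| ≤ r}. -/
def Annulus (n : ℕ) (x : Euc n) (r : ℝ) : Set (Euc n) :=
  {y | r / 2 ≤ dist x y ∧ dist x y ≤ r}

theorem setLIntegral_pi_Icc_comp_eval {ι : Type*} [Fintype ι] [DecidableEq ι] (a b : ι → ℝ)
    (i : ι) {G : ℝ → ENNReal} (hG : Measurable G) :
    ∫⁻ y in univ.pi (fun j => Icc (a j) (b j)), G (y i) =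
      (∏ j ∈ Finset.univ.erase i, ENNReal.ofReal (b j - a j)) * ∫⁻ t in Icc (a i) (b i), G t := by
  rw [volume_pi, Measure.restrict_pi_pi, ← lintegral_map hG (measurable_pi_apply i),
    Measure.pi_map_eval, lintegral_smul_measure]
  simp [smul_eq_mul]

theorem setLIntegral_closedBall_comp_apply_le {ι : Type*} [Fintype ι] (x : EuclideanSpace ℝ ι)
    (r : ℝ) (i : ι) {G : ℝ → ENNReal} (hG : Measurable G) :
    ∫⁻ y in closedBall x r, G (y i) ≤
      ENNReal.ofReal (2 * r) ^ (Fintype.card ι - 1) * ∫⁻ t in Icc (x i - r) (x i + r), G t := by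
  classical
  have hcube : closedBall x r ⊆
      WithLp.ofLp ⁻¹' univ.pi (fun j => Icc (x j - r) (x j + r)) := by
    intro y hy j _
    have := (PiLp.dist_apply_le y x j).trans (mem_closedBall.mp hy)
    rw [Real.dist_eq, abs_sub_le_iff] at this
    exact ⟨by linarith, by linarith⟩
  calc ∫⁻ y in closedBall x r, G (y i)
      ≤ ∫⁻ y in WithLp.ofLp ⁻¹' univ.pi (fun j => Icc (x j - r) (x j + r)), G (y i) :=
        lintegral_mono_set hcube
    _ = ∫⁻ y in univ.pi (fun j => Icc (x j - r) (x j + r)), G (y i) :=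
        (PiLp.volume_preserving_ofLp ι).setLIntegral_comp_preimage
          (MeasurableSet.univ_pi fun _ => measurableSet_Icc) (hG.comp (measurable_pi_apply i))
    _ = _ := by
        rw [setLIntegral_pi_Icc_comp_eval _ _ i hG, Finset.prod_congr rfl fun j _ =>
          congrArg ENNReal.ofReal (by ring : x j + r - (x j - r) = 2 * r),
          Finset.prod_const, Finset.card_erase_of_mem (Finset.mem_univ i), Finset.card_univ]

theorem inv_rpow_le_two_rpow_abs_mul {r d : ℝ} (hr : 0 < r) (hrd : r / 2 ≤ d) (hdr : d ≤ r)
    (a : ℝ) : (d ^ a)⁻¹ ≤ 2 ^ |a| * (r ^ a)⁻¹ := by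
  have hd : 0 < d := by linarith
  rcases le_total 0 a with ha | ha
  · calc (d ^ a)⁻¹ ≤ ((r / 2) ^ a)⁻¹ :=
          inv_anti₀ (by positivity) (rpow_le_rpow (by positivity) hrd ha)
      _ = 2 ^ |a| * (r ^ a)⁻¹ := by
          rw [abs_of_nonneg ha, div_rpow hr.le zero_le_two, inv_div, div_eq_mul_inv]
  · calc (d ^ a)⁻¹ ≤ (r ^ a)⁻¹ := inv_anti₀ (by positivity) (rpow_le_rpow_of_nonpos hd hdr ha)
      _ ≤ 2 ^ |a| * (r ^ a)⁻¹ :=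
          le_mul_of_one_le_left (by positivity) (one_le_rpow one_le_two (abs_nonneg a))

theorem annulus_subset_closedBall {n : ℕ} (x : Euc n) (r : ℝ) : Annulus n x r ⊆ closedBall x r :=
  fun _ hy => mem_closedBall'.mpr hy.2

theorem setIntegral_annulus_comp_apply_div_rpow_le {n : ℕ} (x : Euc n) {r : ℝ} (hr : 0 < r)
    (i : Fin n) (a : ℝ) {g : ℝ → ℝ} (hgm : Measurable g) (hg0 : ∀ t, 0 ≤ g t)
    (hgi : IntegrableOn g (Icc (x i - r) (x i + r))) :
    ∫ y in Annulus n x r, g (y i) / dist x y ^ a ≤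
      2 ^ |a| * (r ^ a)⁻¹ * (2 * r) ^ (n - 1) * ∫ t in Icc (x i - r) (x i + r), g t := by
  set K := 2 ^ |a| * (r ^ a)⁻¹
  have hK : 0 ≤ K := by positivity
  have hg_comp : Measurable fun y : Euc n => g (y i) := hgm.comp (by fun_prop)
  have hpoint : ∀ y ∈ Annulus n x r, g (y i) / dist x y ^ a ≤ K * g (y i) := fun y hy => by
    rw [div_eq_mul_inv, mul_comm]
    exact mul_le_mul_of_nonneg_right (inv_rpow_le_two_rpow_abs_mul hr hy.1 hy.2 a) (hg0 _)
  have hlin : ∫⁻ y in Annulus n x r, ENNReal.ofReal (g (y i) / dist x y ^ a) ≤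
      ENNReal.ofReal (K * (2 * r) ^ (n - 1) * ∫ t in Icc (x i - r) (x i + r), g t) :=
    calc ∫⁻ y in Annulus n x r, ENNReal.ofReal (g (y i) / dist x y ^ a)
        ≤ ∫⁻ y in Annulus n x r, ENNReal.ofReal K * ENNReal.ofReal (g (y i)) :=
          setLIntegral_mono (by fun_prop) fun y hy => by
            rw [← ENNReal.ofReal_mul hK]; exact ENNReal.ofReal_le_ofReal (hpoint y hy)
      _ ≤ ENNReal.ofReal K * ∫⁻ y in closedBall x r, ENNReal.ofReal (g (y i)) := by
          rw [lintegral_const_mul _ hg_comp.ennreal_ofReal]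
          gcongr
          exact annulus_subset_closedBall x r
      _ ≤ ENNReal.ofReal K * (ENNReal.ofReal (2 * r) ^ (n - 1) *
            ∫⁻ t in Icc (x i - r) (x i + r), ENNReal.ofReal (g t)) := by
          gcongr
          simpa using setLIntegral_closedBall_comp_apply_le x r i hgm.ennreal_ofReal
      _ = _ := by
          rw [← ofReal_integral_eq_lintegral_ofReal hgi (ae_of_all _ hg0),
            ← ENNReal.ofReal_pow (by positivity), ← ENNReal.ofReal_mul (by positivity),
            ← ENNReal.ofReal_mul hK, mul_assoc K]
  rw [integral_eq_lintegral_of_nonneg_ae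
    (ae_of_all _ fun y => div_nonneg (hg0 _) (by positivity))
    (by fun_prop : Measurable _).aestronglyMeasurable]
  exact ENNReal.toReal_le_of_le_ofReal
    (mul_nonneg (by positivity) (setIntegral_nonneg measurableSet_Icc fun t _ => hg0 t)) hlin

theorem diniClass_const_mul_rpow {A θ : ℝ} (hA : 0 ≤ A) (hθ0 : 0 < θ) (hθ1 : θ ≤ 1) :
    DiniClass fun t => A * t ^ θ := by
  have hquot : ∀ t ∈ Ioc (0 : ℝ) 1, A * t ^ θ / t = A * t ^ (θ - 1) := fun t ht => by
    rw [rpow_sub_one ht.1.ne', mul_div_assoc]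
  refine ⟨fun t ht => by have := ht.1; positivity, fun s hs t _ hst => ?_,
    fun s hs t ht hst => ?_, ?_⟩
  · exact mul_le_mul_of_nonneg_left (rpow_le_rpow hs.1.le hst hθ0.le) hA
  · simp only [hquot s hs, hquot t ht]
    exact mul_le_mul_of_nonneg_left (rpow_le_rpow_of_nonpos hs.1 hst (by linarith)) hA
  · have hint : IntegrableOn (fun t : ℝ => A * t ^ (θ - 1)) (Ioc 0 1) := by
      simpa using ((intervalIntegral.intervalIntegrable_rpow' (by linarith)).const_mul A).1
    exact hint.congr_fun (fun t ht => (hquot t ht).symm) measurableSet_Ioc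

/-- if f ∈ L^p_loc(ℝ), p > 1, and b(x) = f(x₁) depends on the first
coordinate only, then b satisfies the annular Dini–Kato condition with α = p (uniformly
over x in a bounded set). -/
theorem one_variable_drift_dini (n : ℕ) (hn : 2 ≤ n)
    (p : ℝ) (hp : 1 < p) (f : ℝ → ℝ) (hfm : Measurable f)
    (hf : ∀ R > (0:ℝ), MemLp f (ENNReal.ofReal p) (volume.restrict (Set.Icc (-R) R)))
    (Ω : Set (Euc n)) (hΩb : Bornology.IsBounded Ω) :
    ∃ σ : ℝ → ℝ, DiniClass σ ∧ ∃ r₀ > (0:ℝ), ∀ r ∈ Set.Ioc (0:ℝ) r₀, ∀ x ∈ Ω,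
      (∫ y in Annulus n x r, |f (y ⟨0, by omega⟩)| ^ p / dist x y ^ ((n:ℝ) - p)) ≤ σ r ^ p := by
  obtain ⟨R, hR0, hΩR⟩ := hΩb.subset_closedBall_lt 0 0
  have hfp : IntegrableOn (fun t => |f t| ^ p) (Icc (-(R + 1)) (R + 1)) := by
    have h := (hf (R + 1) (by linarith)).integrable_norm_rpow
      (by simpa using zero_lt_one.trans hp) ENNReal.ofReal_ne_top
    simp only [ENNReal.toReal_ofReal (zero_le_one.trans hp.le), Real.norm_eq_abs] at h
    exact h
  set M := ∫ t in Icc (-(R + 1)) (R + 1), |f t| ^ p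
  set C := 2 ^ |(n : ℝ) - p| * 2 ^ (n - 1) * M
  have hM : 0 ≤ M := setIntegral_nonneg measurableSet_Icc fun t _ => by positivity
  refine ⟨fun t => C ^ p⁻¹ * t ^ (1 - p⁻¹),
    diniClass_const_mul_rpow (by positivity) (sub_pos.mpr (inv_lt_one_of_one_lt₀ hp))
      (sub_le_self _ (by positivity)),
    1, one_pos, fun r ⟨hr0, hr1⟩ x hx => ?_⟩
  set i : Fin n := ⟨0, by omega⟩
  have hxi : |x i| ≤ R := by
    simpa using (PiLp.norm_apply_le x i).trans (mem_closedBall_zero_iff.mp (hΩR hx))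
  have hIcc : Icc (x i - r) (x i + r) ⊆ Icc (-(R + 1)) (R + 1) := by
    rw [abs_le] at hxi; exact Icc_subset_Icc (by linarith) (by linarith)
  have hweight : (r ^ ((n : ℝ) - p))⁻¹ * r ^ (n - 1) = r ^ (p - 1) := by
    rw [← rpow_neg hr0.le, ← rpow_natCast, Nat.cast_sub (by omega), ← rpow_add hr0]
    norm_num
  have hσ : (C ^ p⁻¹ * r ^ (1 - p⁻¹)) ^ p = C * r ^ (p - 1) := by
    rw [mul_rpow (by positivity) (by positivity), ← rpow_mul (by positivity),
      ← rpow_mul hr0.le, inv_mul_cancel₀ (by positivity), rpow_one, sub_mul, one_mul,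
      inv_mul_cancel₀ (by positivity)]
  calc ∫ y in Annulus n x r, |f (y i)| ^ p / dist x y ^ ((n : ℝ) - p)
      ≤ 2 ^ |(n : ℝ) - p| * (r ^ ((n : ℝ) - p))⁻¹ * (2 * r) ^ (n - 1) *
          ∫ t in Icc (x i - r) (x i + r), |f t| ^ p :=
        setIntegral_annulus_comp_apply_div_rpow_le x hr0 i _ (by fun_prop)
          (fun t => by positivity) (hfp.mono_set hIcc)
    _ ≤ 2 ^ |(n : ℝ) - p| * (r ^ ((n : ℝ) - p))⁻¹ * (2 * r) ^ (n - 1) * M := by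
        gcongr
        exact setIntegral_mono_set hfp (ae_of_all _ fun t => by positivity) hIcc.eventuallyLE
    _ = C * r ^ (p - 1) := by rw [← hweight, mul_pow]; ring
    _ = (C ^ p⁻¹ * r ^ (1 - p⁻¹)) ^ p := hσ.symm
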